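/- Let N ≥ 2 be an integer, α, θ ∈ ℝ, let v = (sin α · e^{iθ}, cos α) ∈ ℂ², and define g(φ) = ( (√(N−1)/N)·cos(2α) + (1/N)·sin(2α)·cos(φ+θ) )·(1 − cos φ) − (1/2)·sin(2α)·cos(φ+θ). Then for any φ* ∈ [−π, π], φ* maximizes the one-step target probability P(φ) = |(A(φ)·v)₀|² over φ ∈ [−π, π] if and only if φ* maximizes g over [−π, π]. -/

import Mathlib

open Real Complex Matrix

/-- The generalized Grover iteration matrix with phase `φ` for a database of size `N`. -/
noncomputable def groverA (N : ℕ) (φ : ℝ) : Matrix (Fin 2) (Fin 2) ℂ :=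
  !![Complex.exp (φ * Complex.I) * ((1 - Complex.exp (φ * Complex.I)) / (N : ℂ) - 1),
     ((Real.sqrt ((N : ℝ) - 1) : ℂ) / (N : ℂ)) * (1 - Complex.exp (φ * Complex.I));
     ((Real.sqrt ((N : ℝ) - 1) : ℂ) / (N : ℂ)) * Complex.exp (φ * Complex.I) *
       (1 - Complex.exp (φ * Complex.I)),
     -(1 / (N : ℂ) + (1 - 1 / (N : ℂ)) * Complex.exp (φ * Complex.I))]

/-- The one-step target probability: the squared modulus of the first component of `A(φ)·v`. -/
noncomputable def targetProb (N : ℕ) (φ : ℝ) (v : Fin 2 → ℂ) : ℝ :=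
  ‖(groverA N φ).mulVec v 0‖ ^ 2

/-!
With `r = √(N-1)/N`, the target probability is an affine function of `g` with positive slope,
`P(φ) = sin²α + r sin 2α cos θ + 2r g(φ)`, so the two functions have the same maximizers on any
set. The identity is checked in `ℂ`: there `P = u ū` and, on the unit circle, `conj` is inversion,
so both sides become rational functions of `z = e^{iφ}`, `w = e^{iθ}` that agree modulo
`√(N-1)² = N - 1`.
-/

open ComplexConjugate

theorem StrictMono.isMaxOn_comp_iff {α β γ : Type*} [LinearOrder β] [Preorder γ] {h : β → γ}
    (hh : StrictMono h) {f : α → β} {s : Set α} {a : α} :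
    IsMaxOn (h ∘ f) s a ↔ IsMaxOn f s a := by
  simp only [isMaxOn_iff, Function.comp_apply, hh.le_iff_le]

theorem grover_amplitude_mul_conj_eq {K : Type*} [Field K] {z w N r : K} (hz : z ≠ 0) (hw : w ≠ 0)
    (h2 : (2 : K) ≠ 0) (hN : N ≠ 0) (hr : r ^ 2 = N - 1) (s c : K) :
    (z * ((1 - z) / N - 1) * (s * w) + r / N * (1 - z) * c) *
        (z⁻¹ * ((1 - z⁻¹) / N - 1) * (s * w⁻¹) + r / N * (1 - z⁻¹) * c) =
      s ^ 2 + r / N * (2 * s * c) * ((w + w⁻¹) / 2) +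
        2 * (r / N) *
          ((r / N * (c ^ 2 - s ^ 2) + 1 / N * (2 * s * c) * ((z * w + (z * w)⁻¹) / 2)) *
              (1 - (z + z⁻¹) / 2) -
            1 / 2 * (2 * s * c) * ((z * w + (z * w)⁻¹) / 2)) := by
  field_simp
  -- `r² = N - 1` enters only through `|A₀₀|² = 1 - 2 (N - 1) (1 - cos φ) / N²`.
  linear_combination -(z * w * s ^ 2 * (1 - z) ^ 2) * hr

theorem conj_exp_ofReal_mul_I (x : ℝ) : conj (cexp (x * I)) = (cexp (x * I))⁻¹ := by
  rw [← Complex.exp_conj, ← Complex.exp_neg, map_mul, Complex.conj_ofReal, Complex.conj_I,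
    mul_neg]

theorem ofReal_cos_eq_exp_add_inv (x : ℝ) :
    (Real.cos x : ℂ) = (cexp (x * I) + (cexp (x * I))⁻¹) / 2 := by
  rw [Complex.ofReal_cos, Complex.cos, ← Complex.exp_neg, neg_mul]

noncomputable def groverObjective (N : ℕ) (α θ φ : ℝ) : ℝ :=
  (√((N : ℝ) - 1) / N * Real.cos (2 * α) + 1 / (N : ℝ) * Real.sin (2 * α) * Real.cos (φ + θ)) *
      (1 - Real.cos φ) - 1 / 2 * Real.sin (2 * α) * Real.cos (φ + θ)

theorem targetProb_eq_add_mul_groverObjective (N : ℕ) (hN : 1 ≤ N) (α θ φ : ℝ) :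
    targetProb N φ ![(Real.sin α : ℂ) * cexp (θ * I), (Real.cos α : ℂ)] =
      Real.sin α ^ 2 + √((N : ℝ) - 1) / N * Real.sin (2 * α) * Real.cos θ +
        2 * (√((N : ℝ) - 1) / N) * groverObjective N α θ φ := by
  have hr : ((√((N : ℝ) - 1) : ℝ) : ℂ) ^ 2 = N - 1 := by
    rw [← Complex.ofReal_pow, Real.sq_sqrt (by simpa using hN)]; push_cast; ring
  have hN0 : (N : ℂ) ≠ 0 := by norm_cast; omega
  have hzw : cexp (φ * I) * cexp (θ * I) = cexp ((φ + θ : ℝ) * I) := by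
    rw [← Complex.exp_add, ← add_mul, Complex.ofReal_add]
  have key := grover_amplitude_mul_conj_eq (Complex.exp_ne_zero (φ * I))
    (Complex.exp_ne_zero (θ * I)) two_ne_zero hN0 hr (Real.sin α : ℂ) (Real.cos α)
  rw [← ofReal_cos_eq_exp_add_inv φ, ← ofReal_cos_eq_exp_add_inv θ, hzw,
    ← ofReal_cos_eq_exp_add_inv (φ + θ)] at key
  apply Complex.ofReal_injective
  rw [targetProb, Complex.ofReal_pow, ← Complex.mul_conj']
  simp only [groverA, mulVec, dotProduct, Fin.sum_univ_two, of_apply, cons_val', cons_val_zero,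
    cons_val_one, cons_val_fin_one, map_add, map_mul, map_sub, map_div₀, map_one, map_natCast,
    conj_ofReal]
  rw [conj_exp_ofReal_mul_I, conj_exp_ofReal_mul_I, key, groverObjective, Real.sin_two_mul,
    Real.cos_two_mul']
  push_cast
  ring

theorem stmt_3 (N : ℕ) (hN : 2 ≤ N) (α θ : ℝ)
    (v : Fin 2 → ℂ)
    (hv : v = ![(Real.sin α : ℂ) * Complex.exp (θ * Complex.I), (Real.cos α : ℂ)])
    (g : ℝ → ℝ)
    (hg : g = fun φ =>
      (Real.sqrt ((N : ℝ) - 1) / N * Real.cos (2 * α)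
          + (1 / (N : ℝ)) * Real.sin (2 * α) * Real.cos (φ + θ)) * (1 - Real.cos φ)
        - (1 / 2) * Real.sin (2 * α) * Real.cos (φ + θ))
    (φstar : ℝ) :
    (∀ φ ∈ Set.Icc (-Real.pi) Real.pi, targetProb N φ v ≤ targetProb N φstar v) ↔
      (∀ φ ∈ Set.Icc (-Real.pi) Real.pi, g φ ≤ g φstar) := by
  subst hv hg
  have hslope : 0 < 2 * (√((N : ℝ) - 1) / N) := by
    have : (1 : ℝ) < N := by exact_mod_cast hN
    have : 0 < √((N : ℝ) - 1) := Real.sqrt_pos.mpr (by linarith)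
    positivity
  have haffine : (fun φ => targetProb N φ ![(Real.sin α : ℂ) * cexp (θ * I), (Real.cos α : ℂ)]) =
      (fun y => Real.sin α ^ 2 + √((N : ℝ) - 1) / N * Real.sin (2 * α) * Real.cos θ +
        2 * (√((N : ℝ) - 1) / N) * y) ∘ groverObjective N α θ :=
    funext (targetProb_eq_add_mul_groverObjective N (by omega) α θ)
  simp only [← isMaxOn_iff]
  rw [haffine, ((strictMono_mul_left_of_pos hslope).const_add _).isMaxOn_comp_iff]
  rfl
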